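/- A matrix M ∈ SL_3(𝔽_7) has no eigenvalue in 𝔽_7 if and only if M belongs to one of the 18 sets [i,j] for (i,j) in the list (0,1),(0,2),(0,4),(1,0),(1,3),(1,5),(2,0),(2,5),(2,6),(3,1),(3,4),(4,0),(4,3),(4,6),(5,1),(5,2),(6,2),(6,4). -/
import Mathlib


open Matrix Polynomial

abbrev SL3 := Matrix.SpecialLinearGroup (Fin 3) (ZMod 7)

/-- `M` has an eigenvalue in `𝔽₇`. -/
def HasEigenvalueF7 (M : SL3) : Prop :=
  ∃ (μ : ZMod 7) (v : Fin 3 → ZMod 7), v ≠ 0 ∧ M.val.mulVec v = μ • v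

/-- The set `[i,j]` of matrices in `SL₃(𝔽₇)` with characteristic polynomial
`X³ - i·X² + j·X - 1`. -/
def classSet (i j : ZMod 7) : Set SL3 :=
  {M : SL3 | M.val.charpoly = X ^ 3 - C i * X ^ 2 + C j * X - 1}

/-- The 18 pairs `(i,j)`. -/
def pairs : List (ZMod 7 × ZMod 7) :=
  [(0,1),(0,2),(0,4),(1,0),(1,3),(1,5),(2,0),(2,5),(2,6),
   (3,1),(3,4),(4,0),(4,3),(4,6),(5,1),(5,2),(6,2),(6,4)]

instance : Fact (Nat.Prime 7) := ⟨by norm_num⟩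

lemma eval_charpoly_eq_det (M : Matrix (Fin 3) (Fin 3) (ZMod 7)) (μ : ZMod 7) :
    M.charpoly.eval μ = (μ • (1 : Matrix (Fin 3) (Fin 3) (ZMod 7)) - M).det := by
  rw [Matrix.charpoly, ← Polynomial.coe_evalRingHom, RingHom.map_det]
  congr 1
  ext i j
  rcases eq_or_ne i j with h | h
  · subst h; simp [charmatrix_apply_eq, Matrix.smul_apply, Matrix.one_apply]
  · simp [charmatrix_apply_ne _ _ _ h, Matrix.smul_apply, Matrix.one_apply, h, Matrix.sub_apply]

lemma hasEigen_iff_root (M : SL3) :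
    HasEigenvalueF7 M ↔ ∃ μ : ZMod 7, M.val.charpoly.eval μ = 0 := by
  have key : ∀ (μ : ZMod 7) (v : Fin 3 → ZMod 7),
      M.val.mulVec v = μ • v ↔ (μ • (1 : Matrix (Fin 3) (Fin 3) (ZMod 7)) - M.val).mulVec v = 0 := by
    intro μ v
    rw [Matrix.sub_mulVec, sub_eq_zero, Matrix.smul_mulVec, Matrix.one_mulVec]
    exact eq_comm
  unfold HasEigenvalueF7
  refine exists_congr fun μ => ?_
  simp only [key]
  rw [eval_charpoly_eq_det]
  exact Matrix.exists_mulVec_eq_zero_iff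

lemma dec1 : ∀ p ∈ pairs, ∀ μ : ZMod 7, μ^3 - p.1 * μ^2 + p.2 * μ - 1 ≠ 0 := by decide

lemma dec2 : ∀ i j : ZMod 7, (∀ μ : ZMod 7, μ^3 - i*μ^2 + j*μ - 1 ≠ 0) → (i, j) ∈ pairs := by
  decide

lemma cubic_eq (p : (ZMod 7)[X]) (hm : p.Monic) (hd : p.natDegree = 3) :
    p = X^3 + C (p.coeff 2) * X^2 + C (p.coeff 1) * X + C (p.coeff 0) := by
  have h3 : p.coeff 3 = 1 := by
    have := hm.coeff_natDegree; rwa [hd] at this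
  ext n
  rcases lt_or_ge n 4 with h | h
  · interval_cases n <;> simp [coeff_X_pow, coeff_C, h3]
  · have h0 : p.coeff n = 0 := coeff_eq_zero_of_natDegree_lt (by omega)
    simp [coeff_X_pow, coeff_C, coeff_X, h0, show n ≠ 3 by omega, show n ≠ 2 by omega,
      show ¬ (1 = n) by omega, show n ≠ 0 by omega]

theorem no_eigenvalue_iff_mem_classSet (M : SL3) :
    ¬ HasEigenvalueF7 M ↔ ∃ p ∈ pairs, M ∈ classSet p.1 p.2 := by
  have hdeg : M.val.charpoly.natDegree = 3 := by
    rw [Matrix.charpoly_natDegree_eq_dim]; simp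
  have hcp := cubic_eq M.val.charpoly (Matrix.charpoly_monic _) hdeg
  have h0 : M.val.charpoly.coeff 0 = -1 := by
    have := Matrix.det_eq_sign_charpoly_coeff M.val
    rw [M.property] at this
    simp at this
    linear_combination this
  constructor
  · intro h
    have hroot : ∀ μ : ZMod 7, M.val.charpoly.eval μ ≠ 0 := by
      intro μ hμ; exact h ((hasEigen_iff_root M).mpr ⟨μ, hμ⟩)
    refine ⟨(-(M.val.charpoly.coeff 2), M.val.charpoly.coeff 1), dec2 _ _ ?_, ?_⟩
    · intro μ hμ
      apply hroot μ
      rw [hcp]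
      simp [h0]
      linear_combination hμ
    · show M.val.charpoly = _
      conv_lhs => rw [hcp, h0]
      simp only [map_neg, Polynomial.C_1]
      ring
  · rintro ⟨p, hp, hM⟩ h
    obtain ⟨μ, hμ⟩ := (hasEigen_iff_root M).mp h
    have hM' : M.val.charpoly = X ^ 3 - C p.1 * X ^ 2 + C p.2 * X - 1 := hM
    rw [hM'] at hμ
    simp at hμ
    exact dec1 p hp μ (by linear_combination hμ)
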